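/- Let V ⊆ K[G] be an S-module and T₁, T₂ ⊆ G subsets whose simple quantities lie in V. Then the simple quantities of T₁ ∩ T₂ and of T₁ ∪ T₂ also lie in V. -/

import Mathlib

/-!
Every element of the span of the simple quantities of the parts has coefficients that are
constant on each part. Hence the simple quantity of `T` lies in that span exactly when `T` is a
union of parts, and unions of parts are closed under intersection and union.
-/

open Finset MonoidAlgebra

noncomputable def simpleQuantity (K : Type*) {G : Type*} [Semiring K] (T : Finset G) :
    MonoidAlgebra K G :=
  ∑ g ∈ T, single g 1

def Finpartition.IsSaturated {α : Type*} [DecidableEq α] {s : Finset α} (P : Finpartition s)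
    (T : Finset α) : Prop :=
  ∀ C ∈ P.parts, ∀ a ∈ C, a ∈ T → C ⊆ T

namespace Finpartition

variable {α : Type*} [DecidableEq α] {s : Finset α} {P : Finpartition s} {T₁ T₂ : Finset α}

theorem IsSaturated.inter (h₁ : P.IsSaturated T₁) (h₂ : P.IsSaturated T₂) :
    P.IsSaturated (T₁ ∩ T₂) := fun C hC a ha haT =>
  subset_inter (h₁ C hC a ha (mem_inter.1 haT).1) (h₂ C hC a ha (mem_inter.1 haT).2)

theorem IsSaturated.union (h₁ : P.IsSaturated T₁) (h₂ : P.IsSaturated T₂) :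
    P.IsSaturated (T₁ ∪ T₂) := fun C hC a ha haT =>
  (mem_union.1 haT).elim (fun h => (h₁ C hC a ha h).trans subset_union_left)
    (fun h => (h₂ C hC a ha h).trans subset_union_right)

theorem IsSaturated.eq_biUnion_parts_subset {T : Finset α} (hT : P.IsSaturated T) (hTs : T ⊆ s) :
    T = {C ∈ P.parts | C ⊆ T}.biUnion id := by
  ext a
  simp only [mem_biUnion, mem_filter, id]
  constructor
  · intro ha
    obtain ⟨C, hC, haC⟩ := P.exists_mem (hTs ha)
    exact ⟨C, ⟨hC, hT C hC a haC ha⟩, haC⟩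
  · rintro ⟨C, ⟨-, hCT⟩, haC⟩
    exact hCT haC

end Finpartition

section SimpleQuantity

variable {K G : Type*} [Semiring K] [DecidableEq G]

theorem coeff_simpleQuantity (T : Finset G) (g : G) :
    (simpleQuantity K T).coeff g = if g ∈ T then 1 else 0 := by
  simp [simpleQuantity, coeff_sum, Finsupp.finsetSum_apply, Finsupp.single_apply]

variable {s : Finset G} {P : Finpartition s}

theorem coeff_eq_of_mem_span_simpleQuantity_parts {x : MonoidAlgebra K G}
    (hx : x ∈ Submodule.span K (simpleQuantity K '' ↑P.parts)) {C : Finset G} (hC : C ∈ P.parts)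
    {g g' : G} (hg : g ∈ C) (hg' : g' ∈ C) : x.coeff g = x.coeff g' := by
  induction hx using Submodule.span_induction with
  | mem y hy =>
    obtain ⟨D, hD, rfl⟩ := hy
    have : g ∈ D ↔ g' ∈ D := by
      constructor <;> intro h
      · rwa [P.eq_of_mem_parts hD hC h hg]
      · rwa [P.eq_of_mem_parts hD hC h hg']
    simp only [coeff_simpleQuantity, this]
  | zero => rfl
  | add y z _ _ hy hz => simp only [coeff_add, Finsupp.add_apply, hy, hz]
  | smul c y _ hy => simp only [coeff_smul, Finsupp.smul_apply, hy]

theorem isSaturated_of_simpleQuantity_mem_span [Nontrivial K] {T : Finset G}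
    (hT : simpleQuantity K T ∈ Submodule.span K (simpleQuantity K '' ↑P.parts)) :
    P.IsSaturated T := by
  intro C hC g hg hgT g' hg'
  have := coeff_eq_of_mem_span_simpleQuantity_parts hT hC hg hg'
  rw [coeff_simpleQuantity, coeff_simpleQuantity, if_pos hgT] at this
  by_contra h
  exact one_ne_zero (this.trans (if_neg h))

theorem simpleQuantity_mem_span_of_isSaturated {T : Finset G} (hT : P.IsSaturated T)
    (hTs : T ⊆ s) : simpleQuantity K T ∈ Submodule.span K (simpleQuantity K '' ↑P.parts) := by
  rw [hT.eq_biUnion_parts_subset hTs, simpleQuantity,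
    sum_biUnion (P.disjoint.subset (filter_subset _ _))]
  exact Submodule.sum_mem _ fun C hC =>
    Submodule.subset_span ⟨C, (mem_filter.1 hC).1, rfl⟩

end SimpleQuantity

theorem stmt_1_general {K : Type*} [Field K] {G : Type*} [Fintype G] [DecidableEq G]
    (V : Submodule K (MonoidAlgebra K G)) (P : Finpartition (univ : Finset G))
    (hV : V = Submodule.span K
      ((fun C : Finset G => ∑ g ∈ C, MonoidAlgebra.single g (1 : K)) '' ↑P.parts))
    (T₁ T₂ : Finset G)
    (h₁ : (∑ g ∈ T₁, MonoidAlgebra.single g (1 : K)) ∈ V)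
    (h₂ : (∑ g ∈ T₂, MonoidAlgebra.single g (1 : K)) ∈ V) :
    (∑ g ∈ T₁ ∩ T₂, MonoidAlgebra.single g (1 : K)) ∈ V ∧
    (∑ g ∈ T₁ ∪ T₂, MonoidAlgebra.single g (1 : K)) ∈ V := by
  subst hV
  have hs₁ : P.IsSaturated T₁ := isSaturated_of_simpleQuantity_mem_span h₁
  have hs₂ : P.IsSaturated T₂ := isSaturated_of_simpleQuantity_mem_span h₂
  exact ⟨simpleQuantity_mem_span_of_isSaturated (hs₁.inter hs₂) (subset_univ _),
    simpleQuantity_mem_span_of_isSaturated (hs₁.union hs₂) (subset_univ _)⟩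

/-- S-modules are closed under intersections and unions of simple quantities. -/
theorem stmt_1 {K : Type*} [Field K] {G : Type*} [Group G] [Fintype G] [DecidableEq G]
    (V : Submodule K (MonoidAlgebra K G)) (P : Finpartition (univ : Finset G))
    (hV : V = Submodule.span K
      ((fun C : Finset G => ∑ g ∈ C, MonoidAlgebra.single g (1 : K)) '' ↑P.parts))
    (T₁ T₂ : Finset G)
    (h₁ : (∑ g ∈ T₁, MonoidAlgebra.single g (1 : K)) ∈ V)
    (h₂ : (∑ g ∈ T₂, MonoidAlgebra.single g (1 : K)) ∈ V) :
    (∑ g ∈ T₁ ∩ T₂, MonoidAlgebra.single g (1 : K)) ∈ V ∧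
    (∑ g ∈ T₁ ∪ T₂, MonoidAlgebra.single g (1 : K)) ∈ V :=
  stmt_1_general V P hV T₁ T₂ h₁ h₂
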